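/- arXiv:1008.2528 — 6 statements merged into one kernel-verified Lean document; each statement's English description precedes it below -/
import Mathlib

section
/- Let B and D be real matrices with columns split into blocks B = (B_m B_c B_r B_u B_w B_l B_g B_j), D = (D_m D_c D_r D_u D_w D_l D_g D_j), satisfying B D^T = 0. Suppose M, R, W, G are positive definite. If vectors x, y satisfy x^T B_m M + y^T D_m = 0, y^T D_c = 0, x^T B_r R + y^T D_r = 0, y^T D_u = 0, x^T B_w + y^T D_w W = 0, x^T B_l = 0, x^T B_g + y^T D_g G = 0, and x^T B_j = 0, then x^T B_m = 0, x^T B_r = 0, y^T D_w = 0, and y^T D_g = 0. -/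
/-!
Pair `x` and `y` through `B Dᵀ = 0`: blockwise, `0 = xᵀ B Dᵀ y = Σ (xᵀ B_•) · (yᵀ D_•)`.
The four relations `yᵀ D_c = yᵀ D_u = xᵀ B_l = xᵀ B_j = 0` kill four terms, and the other four
turn each remaining term into minus a quadratic form in `M`, `R`, `W` or `G`. A sum of four
nonnegative quadratic forms vanishes only if every argument does, by positive definiteness.
-/

open Matrix

namespace Matrix

variable {R : Type*} {l m n : Type*} [Fintype l] [Fintype m] [Fintype n]

theorem dotProduct_mul_transpose_mulVec [CommSemiring R] (B : Matrix l n R) (D : Matrix m n R)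
    (x : l → R) (y : m → R) : x ⬝ᵥ (B * Dᵀ) *ᵥ y = (x ᵥ* B) ⬝ᵥ (y ᵥ* D) := by
  rw [← mulVec_mulVec, dotProduct_mulVec, mulVec_transpose]

theorem dotProduct_eq_neg_of_vecMul_add_eq_zero [CommRing R] {A : Matrix n n R} {u v : n → R}
    (h : u ᵥ* A + v = 0) : u ⬝ᵥ v = -(u ⬝ᵥ A *ᵥ u) := by
  rw [eq_neg_of_add_eq_zero_right h, dotProduct_neg, dotProduct_comm, ← dotProduct_mulVec]

theorem dotProduct_eq_neg_of_add_vecMul_eq_zero [CommRing R] {A : Matrix n n R} {u v : n → R}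
    (h : v + u ᵥ* A = 0) : v ⬝ᵥ u = -(u ⬝ᵥ A *ᵥ u) := by
  rw [eq_neg_of_add_eq_zero_left h, neg_dotProduct, ← dotProduct_mulVec]

variable [NonUnitalNonAssocSemiring R] [Preorder R] {A : Matrix n n R}

theorem dotProduct_mulVec_self_nonneg (hA : ∀ u : n → R, u ≠ 0 → 0 < u ⬝ᵥ A *ᵥ u)
    (u : n → R) : 0 ≤ u ⬝ᵥ A *ᵥ u := by
  rcases eq_or_ne u 0 with rfl | hu
  · simp
  · exact (hA u hu).le

theorem eq_zero_of_dotProduct_mulVec_self_nonpos (hA : ∀ u : n → R, u ≠ 0 → 0 < u ⬝ᵥ A *ᵥ u)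
    {u : n → R} (h : u ⬝ᵥ A *ᵥ u ≤ 0) : u = 0 := by
  by_contra hu
  exact (hA u hu).not_ge h

end Matrix

/-- Kernel-vanishing step in the proof of Theorem 3.1: with BDᵀ = 0 (blockwise) and
M, R, W, G positive definite, the eight left-kernel relations force
xᵀB_m = 0, xᵀB_r = 0, yᵀD_w = 0 and yᵀD_g = 0. -/
theorem kernel_vanishing_step {p t nm nc nr nu nw nl ng nj : ℕ}
    (Bm : Matrix (Fin p) (Fin nm) ℝ) (Bc : Matrix (Fin p) (Fin nc) ℝ)
    (Br : Matrix (Fin p) (Fin nr) ℝ) (Bu : Matrix (Fin p) (Fin nu) ℝ)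
    (Bw : Matrix (Fin p) (Fin nw) ℝ) (Bl : Matrix (Fin p) (Fin nl) ℝ)
    (Bg : Matrix (Fin p) (Fin ng) ℝ) (Bj : Matrix (Fin p) (Fin nj) ℝ)
    (Dm : Matrix (Fin t) (Fin nm) ℝ) (Dc : Matrix (Fin t) (Fin nc) ℝ)
    (Dr : Matrix (Fin t) (Fin nr) ℝ) (Du : Matrix (Fin t) (Fin nu) ℝ)
    (Dw : Matrix (Fin t) (Fin nw) ℝ) (Dl : Matrix (Fin t) (Fin nl) ℝ)
    (Dg : Matrix (Fin t) (Fin ng) ℝ) (Dj : Matrix (Fin t) (Fin nj) ℝ)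
    (M : Matrix (Fin nm) (Fin nm) ℝ) (R : Matrix (Fin nr) (Fin nr) ℝ)
    (W : Matrix (Fin nw) (Fin nw) ℝ) (G : Matrix (Fin ng) (Fin ng) ℝ)
    (hBD : Bm * Dmᵀ + Bc * Dcᵀ + Br * Drᵀ + Bu * Duᵀ
         + Bw * Dwᵀ + Bl * Dlᵀ + Bg * Dgᵀ + Bj * Djᵀ = 0)
    (hM : ∀ u : Fin nm → ℝ, u ≠ 0 → 0 < u ⬝ᵥ M.mulVec u)
    (hR : ∀ u : Fin nr → ℝ, u ≠ 0 → 0 < u ⬝ᵥ R.mulVec u)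
    (hW : ∀ u : Fin nw → ℝ, u ≠ 0 → 0 < u ⬝ᵥ W.mulVec u)
    (hG : ∀ u : Fin ng → ℝ, u ≠ 0 → 0 < u ⬝ᵥ G.mulVec u)
    (x : Fin p → ℝ) (y : Fin t → ℝ)
    (h1 : Bm.vecMul x ᵥ* M + Dm.vecMul y = 0)
    (h2 : Dc.vecMul y = 0)
    (h3 : Br.vecMul x ᵥ* R + Dr.vecMul y = 0)
    (h4 : Du.vecMul y = 0)
    (h5 : Bw.vecMul x + Dw.vecMul y ᵥ* W = 0)
    (h6 : Bl.vecMul x = 0)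
    (h7 : Bg.vecMul x + Dg.vecMul y ᵥ* G = 0)
    (h8 : Bj.vecMul x = 0) :
    Bm.vecMul x = 0 ∧ Br.vecMul x = 0 ∧ Dw.vecMul y = 0 ∧ Dg.vecMul y = 0 := by
  have hpair := congrArg (fun N => x ⬝ᵥ N *ᵥ y) hBD
  simp only [add_mulVec, dotProduct_add, dotProduct_mul_transpose_mulVec, zero_mulVec,
    dotProduct_zero] at hpair
  rw [h2, h4, h6, h8, dotProduct_eq_neg_of_vecMul_add_eq_zero h1,
    dotProduct_eq_neg_of_vecMul_add_eq_zero h3, dotProduct_eq_neg_of_add_vecMul_eq_zero h5,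
    dotProduct_eq_neg_of_add_vecMul_eq_zero h7] at hpair
  simp only [dotProduct_zero, zero_dotProduct, add_zero] at hpair
  have qM := dotProduct_mulVec_self_nonneg hM (x ᵥ* Bm)
  have qR := dotProduct_mulVec_self_nonneg hR (x ᵥ* Br)
  have qW := dotProduct_mulVec_self_nonneg hW (y ᵥ* Dw)
  have qG := dotProduct_mulVec_self_nonneg hG (y ᵥ* Dg)
  exact ⟨eq_zero_of_dotProduct_mulVec_self_nonpos hM (by linarith),
    eq_zero_of_dotProduct_mulVec_self_nonpos hR (by linarith),
    eq_zero_of_dotProduct_mulVec_self_nonpos hW (by linarith),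
    eq_zero_of_dotProduct_mulVec_self_nonpos hG (by linarith)⟩
end

section
/- Under the hypotheses of the previous statement, if additionally the stacked matrix formed by the blocks (B_m, B_r, B_w, B_g, B_l, B_j) has full row rank (no VC-loops) and the stacked matrix formed by (D_c, D_u, D_w, D_g, D_m, D_r) has full row rank (no IL-cutsets), then x = 0 and y = 0. -/
open Matrix


open Matrix in
private lemma pair_dot' {p t n : ℕ} (B : Matrix (Fin p) (Fin n) ℝ) (D : Matrix (Fin t) (Fin n) ℝ)
    (x : Fin p → ℝ) (y : Fin t → ℝ) :
    x ⬝ᵥ (B * Dᵀ).mulVec y = B.vecMul x ⬝ᵥ D.vecMul y := by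
  rw [dotProduct_mulVec, ← vecMul_vecMul, vecMul_transpose, dotProduct_comm,
    dotProduct_mulVec, dotProduct_comm]

open Matrix in
private lemma quad_nonneg' {n : ℕ} (M : Matrix (Fin n) (Fin n) ℝ)
    (hM : ∀ u : Fin n → ℝ, u ≠ 0 → 0 < u ⬝ᵥ M.mulVec u) (u : Fin n → ℝ) :
    0 ≤ u ⬝ᵥ M.mulVec u := by
  by_cases h : u = 0
  · simp [h]
  · exact (hM u h).le

open Matrix in
private lemma quad_eq_zero' {n : ℕ} (M : Matrix (Fin n) (Fin n) ℝ)
    (hM : ∀ u : Fin n → ℝ, u ≠ 0 → 0 < u ⬝ᵥ M.mulVec u) (u : Fin n → ℝ)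
    (h : u ⬝ᵥ M.mulVec u = 0) : u = 0 := by
  by_contra hu
  exact (hM u hu).ne' h

/-- Conclusion of the proof of Theorem 3.1: under blockwise BDᵀ = 0, positive
definiteness of M, R, W, G, absence of VC-loops (xᵀ annihilating B_m, B_r, B_w,
B_g, B_l, B_j forces x = 0) and absence of IL-cutsets (yᵀ annihilating D_c, D_u,
D_w, D_g, D_m, D_r forces y = 0), the eight kernel relations imply x = 0, y = 0. -/
theorem kernel_vanishing_conclusion {p t nm nc nr nu nw nl ng nj : ℕ}
    (Bm : Matrix (Fin p) (Fin nm) ℝ) (Bc : Matrix (Fin p) (Fin nc) ℝ)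
    (Br : Matrix (Fin p) (Fin nr) ℝ) (Bu : Matrix (Fin p) (Fin nu) ℝ)
    (Bw : Matrix (Fin p) (Fin nw) ℝ) (Bl : Matrix (Fin p) (Fin nl) ℝ)
    (Bg : Matrix (Fin p) (Fin ng) ℝ) (Bj : Matrix (Fin p) (Fin nj) ℝ)
    (Dm : Matrix (Fin t) (Fin nm) ℝ) (Dc : Matrix (Fin t) (Fin nc) ℝ)
    (Dr : Matrix (Fin t) (Fin nr) ℝ) (Du : Matrix (Fin t) (Fin nu) ℝ)
    (Dw : Matrix (Fin t) (Fin nw) ℝ) (Dl : Matrix (Fin t) (Fin nl) ℝ)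
    (Dg : Matrix (Fin t) (Fin ng) ℝ) (Dj : Matrix (Fin t) (Fin nj) ℝ)
    (M : Matrix (Fin nm) (Fin nm) ℝ) (R : Matrix (Fin nr) (Fin nr) ℝ)
    (W : Matrix (Fin nw) (Fin nw) ℝ) (G : Matrix (Fin ng) (Fin ng) ℝ)
    (hBD : Bm * Dmᵀ + Bc * Dcᵀ + Br * Drᵀ + Bu * Duᵀ
         + Bw * Dwᵀ + Bl * Dlᵀ + Bg * Dgᵀ + Bj * Djᵀ = 0)
    (hM : ∀ u : Fin nm → ℝ, u ≠ 0 → 0 < u ⬝ᵥ M.mulVec u)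
    (hR : ∀ u : Fin nr → ℝ, u ≠ 0 → 0 < u ⬝ᵥ R.mulVec u)
    (hW : ∀ u : Fin nw → ℝ, u ≠ 0 → 0 < u ⬝ᵥ W.mulVec u)
    (hG : ∀ u : Fin ng → ℝ, u ≠ 0 → 0 < u ⬝ᵥ G.mulVec u)
    (hnoVC : ∀ x : Fin p → ℝ, Bm.vecMul x = 0 → Br.vecMul x = 0 → Bw.vecMul x = 0 →
      Bg.vecMul x = 0 → Bl.vecMul x = 0 → Bj.vecMul x = 0 → x = 0)
    (hnoIL : ∀ y : Fin t → ℝ, Dc.vecMul y = 0 → Du.vecMul y = 0 → Dw.vecMul y = 0 →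
      Dg.vecMul y = 0 → Dm.vecMul y = 0 → Dr.vecMul y = 0 → y = 0) :
    ∀ (x : Fin p → ℝ) (y : Fin t → ℝ),
      Bm.vecMul x ᵥ* M + Dm.vecMul y = 0 →
      Dc.vecMul y = 0 →
      Br.vecMul x ᵥ* R + Dr.vecMul y = 0 →
      Du.vecMul y = 0 →
      Bw.vecMul x + Dw.vecMul y ᵥ* W = 0 →
      Bl.vecMul x = 0 →
      Bg.vecMul x + Dg.vecMul y ᵥ* G = 0 →
      Bj.vecMul x = 0 →
      x = 0 ∧ y = 0 := by

  intro x y h1 h2 h3 h4 h5 h6 h7 h8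
  -- abbreviations
  have hdm : Dm.vecMul y = -(Bm.vecMul x ᵥ* M) := by
    have := h1; linear_combination (norm := module) this
  have hdr : Dr.vecMul y = -(Br.vecMul x ᵥ* R) := by
    linear_combination (norm := module) h3
  have hbw : Bw.vecMul x = -(Dw.vecMul y ᵥ* W) := by
    linear_combination (norm := module) h5
  have hbg : Bg.vecMul x = -(Dg.vecMul y ᵥ* G) := by
    linear_combination (norm := module) h7
  have key : x ⬝ᵥ (Bm * Dmᵀ + Bc * Dcᵀ + Br * Drᵀ + Bu * Duᵀ
      + Bw * Dwᵀ + Bl * Dlᵀ + Bg * Dgᵀ + Bj * Djᵀ).mulVec y = 0 := by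
    rw [hBD]; simp
  have expand : Bm.vecMul x ⬝ᵥ Dm.vecMul y + Bc.vecMul x ⬝ᵥ Dc.vecMul y
      + Br.vecMul x ⬝ᵥ Dr.vecMul y + Bu.vecMul x ⬝ᵥ Du.vecMul y
      + Bw.vecMul x ⬝ᵥ Dw.vecMul y + Bl.vecMul x ⬝ᵥ Dl.vecMul y
      + Bg.vecMul x ⬝ᵥ Dg.vecMul y + Bj.vecMul x ⬝ᵥ Dj.vecMul y = 0 := by
    rw [← pair_dot', ← pair_dot', ← pair_dot', ← pair_dot', ← pair_dot', ← pair_dot',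
      ← pair_dot', ← pair_dot']
    simpa [Matrix.add_mulVec, dotProduct_add] using key
  have qm : Bm.vecMul x ⬝ᵥ Dm.vecMul y = -(Bm.vecMul x ⬝ᵥ M.mulVec (Bm.vecMul x)) := by
    rw [hdm, dotProduct_neg, dotProduct_comm, dotProduct_mulVec]
  have qr : Br.vecMul x ⬝ᵥ Dr.vecMul y = -(Br.vecMul x ⬝ᵥ R.mulVec (Br.vecMul x)) := by
    rw [hdr, dotProduct_neg, dotProduct_comm, dotProduct_mulVec]
  have qw : Bw.vecMul x ⬝ᵥ Dw.vecMul y = -(Dw.vecMul y ⬝ᵥ W.mulVec (Dw.vecMul y)) := by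
    rw [hbw, neg_dotProduct, dotProduct_mulVec]
  have qg : Bg.vecMul x ⬝ᵥ Dg.vecMul y = -(Dg.vecMul y ⬝ᵥ G.mulVec (Dg.vecMul y)) := by
    rw [hbg, neg_dotProduct, dotProduct_mulVec]
  rw [qm, qr, qw, qg, h2, h4, h6, h8] at expand
  simp only [dotProduct_zero, zero_dotProduct, add_zero] at expand
  have sum0 : Bm.vecMul x ⬝ᵥ M.mulVec (Bm.vecMul x)
      + Br.vecMul x ⬝ᵥ R.mulVec (Br.vecMul x)
      + Dw.vecMul y ⬝ᵥ W.mulVec (Dw.vecMul y)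
      + Dg.vecMul y ⬝ᵥ G.mulVec (Dg.vecMul y) = 0 := by linarith
  have nM := quad_nonneg' M hM (Bm.vecMul x)
  have nR := quad_nonneg' R hR (Br.vecMul x)
  have nW := quad_nonneg' W hW (Dw.vecMul y)
  have nG := quad_nonneg' G hG (Dg.vecMul y)
  have zM : Bm.vecMul x = 0 := quad_eq_zero' M hM _ (by linarith)
  have zR : Br.vecMul x = 0 := quad_eq_zero' R hR _ (by linarith)
  have zW : Dw.vecMul y = 0 := quad_eq_zero' W hW _ (by linarith)
  have zG : Dg.vecMul y = 0 := quad_eq_zero' G hG _ (by linarith)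
  have zBw : Bw.vecMul x = 0 := by rw [hbw, zW]; simp
  have zBg : Bg.vecMul x = 0 := by rw [hbg, zG]; simp
  have hx : x = 0 := hnoVC x zM zR zBw zBg h6 h8
  have zDm : Dm.vecMul y = 0 := by rw [hdm, zM]; simp
  have zDr : Dr.vecMul y = 0 := by rw [hdr, zR]; simp
  exact ⟨hx, hnoIL y h2 h4 zW zG zDm zDr⟩
end

section
/- Let A = [[B_c E_c, 0, B_r R, 0, B_g, B_j], [0, D_l 𝓡_l, D_r, D_u, D_g G, 0]] where B, D are reduced loop/cutset matrices (split conformally) with B D^T = 0, R and G positive definite, and E_c, 𝓡_l nonsingular. Then any vector (u, v, w, x, y, z) in the kernel of A satisfies w = 0 and y = 0. -/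
open Matrix

/-!
The top block row of `A` says that `a = (0, E_c u, R w, 0, 0, 0, y, z)` lies in `ker B = im Dᵀ`,
the bottom block row that `b = (0, 0, w, x, 0, 𝓡_l v, G y, 0)` lies in `ker D`. Hence `a ⊥ b`,
and in `a ⬝ b` only the common branches `r` and `g` survive: `(R w) ⬝ w + y ⬝ (G y) = 0`.
Both terms are nonnegative by positive definiteness, so both vanish, and then so do `w` and `y`.
-/

section Orthogonality

variable {α m n : Type*} [CommSemiring α] [Fintype m] [Fintype n]

theorem Matrix.dotProduct_eq_zero_of_mem_range_transpose {D : Matrix m n α} {a b : n → α}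
    (ha : a ∈ LinearMap.range Dᵀ.mulVecLin) (hb : D *ᵥ b = 0) : a ⬝ᵥ b = 0 := by
  obtain ⟨s, rfl⟩ := ha
  rw [mulVecLin_apply, mulVec_transpose, ← dotProduct_mulVec, hb, dotProduct_zero]

end Orthogonality

section PositiveDefinite

variable {α n : Type*} [NonUnitalNonAssocSemiring α] [Preorder α] [Fintype n] {M : Matrix n n α}

theorem Matrix.dotProduct_mulVec_self_nonneg_s13 (hM : ∀ u : n → α, u ≠ 0 → 0 < u ⬝ᵥ M *ᵥ u)
    (u : n → α) : 0 ≤ u ⬝ᵥ M *ᵥ u := by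
  by_cases hu : u = 0
  · simp [hu]
  · exact (hM u hu).le

theorem Matrix.eq_zero_of_dotProduct_mulVec_self_eq_zero
    (hM : ∀ u : n → α, u ≠ 0 → 0 < u ⬝ᵥ M *ᵥ u) {u : n → α} (h : u ⬝ᵥ M *ᵥ u = 0) : u = 0 := by
  by_contra hu
  exact (hM u hu).ne' h

end PositiveDefinite

theorem kernel_of_A_w_y_vanish_general {p t nm nc nr nu nw nl ng nj : ℕ}
    (Bm : Matrix (Fin p) (Fin nm) ℝ) (Bc : Matrix (Fin p) (Fin nc) ℝ)
    (Br : Matrix (Fin p) (Fin nr) ℝ) (Bu : Matrix (Fin p) (Fin nu) ℝ)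
    (Bw : Matrix (Fin p) (Fin nw) ℝ) (Bl : Matrix (Fin p) (Fin nl) ℝ)
    (Bg : Matrix (Fin p) (Fin ng) ℝ) (Bj : Matrix (Fin p) (Fin nj) ℝ)
    (Dm : Matrix (Fin t) (Fin nm) ℝ) (Dc : Matrix (Fin t) (Fin nc) ℝ)
    (Dr : Matrix (Fin t) (Fin nr) ℝ) (Du : Matrix (Fin t) (Fin nu) ℝ)
    (Dw : Matrix (Fin t) (Fin nw) ℝ) (Dl : Matrix (Fin t) (Fin nl) ℝ)
    (Dg : Matrix (Fin t) (Fin ng) ℝ) (Dj : Matrix (Fin t) (Fin nj) ℝ)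
    (R : Matrix (Fin nr) (Fin nr) ℝ) (G : Matrix (Fin ng) (Fin ng) ℝ)
    (Ec : Matrix (Fin nc) (Fin nc) ℝ) (Rl : Matrix (Fin nl) (Fin nl) ℝ)
    (hkerB : LinearMap.ker (Matrix.fromCols Bm (Matrix.fromCols Bc (Matrix.fromCols Br
      (Matrix.fromCols Bu (Matrix.fromCols Bw (Matrix.fromCols Bl
        (Matrix.fromCols Bg Bj))))))).mulVecLin
        = LinearMap.range ((Matrix.fromCols Dm (Matrix.fromCols Dc (Matrix.fromCols Dr
      (Matrix.fromCols Du (Matrix.fromCols Dw (Matrix.fromCols Dl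
        (Matrix.fromCols Dg Dj)))))))ᵀ).mulVecLin)
    (hR : ∀ u : Fin nr → ℝ, u ≠ 0 → 0 < u ⬝ᵥ R.mulVec u)
    (hG : ∀ u : Fin ng → ℝ, u ≠ 0 → 0 < u ⬝ᵥ G.mulVec u)
    :
    ∀ (u : Fin nc → ℝ) (v : Fin nl → ℝ) (w : Fin nr → ℝ) (x : Fin nu → ℝ)
      (y : Fin ng → ℝ) (z : Fin nj → ℝ),
      (Matrix.fromRows
      (Matrix.fromCols (Bc * Ec) (Matrix.fromCols (0 : Matrix (Fin p) (Fin nl) ℝ)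
        (Matrix.fromCols (Br * R) (Matrix.fromCols (0 : Matrix (Fin p) (Fin nu) ℝ)
          (Matrix.fromCols Bg Bj)))))
      (Matrix.fromCols (0 : Matrix (Fin t) (Fin nc) ℝ)
        (Matrix.fromCols (Dl * Rl) (Matrix.fromCols Dr
          (Matrix.fromCols Du (Matrix.fromCols (Dg * G)
            (0 : Matrix (Fin t) (Fin nj) ℝ))))))).mulVec
        (Sum.elim u (Sum.elim v (Sum.elim w (Sum.elim x (Sum.elim y z))))) = 0 →
      w = 0 ∧ y = 0 := by
  intro u v w x y z h
  rw [fromRows_mulVec, ← Sum.elim_zero_zero, Sum.elim_eq_iff] at h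
  obtain ⟨htop, hbot⟩ := h
  have hker_B : fromCols Bm (fromCols Bc (fromCols Br (fromCols Bu (fromCols Bw (fromCols Bl
      (fromCols Bg Bj)))))) *ᵥ Sum.elim 0 (Sum.elim (Ec *ᵥ u) (Sum.elim (R *ᵥ w)
        (Sum.elim 0 (Sum.elim 0 (Sum.elim 0 (Sum.elim y z)))))) = 0 := by
    simpa [fromCols_mulVec_sumElim, mulVec_mulVec] using htop
  have hker_D : fromCols Dm (fromCols Dc (fromCols Dr (fromCols Du (fromCols Dw (fromCols Dl
      (fromCols Dg Dj)))))) *ᵥ Sum.elim 0 (Sum.elim 0 (Sum.elim w (Sum.elim x (Sum.elim 0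
        (Sum.elim (Rl *ᵥ v) (Sum.elim (G *ᵥ y) 0)))))) = 0 := by
    simpa [fromCols_mulVec_sumElim, mulVec_mulVec, add_left_comm] using hbot
  have horth := dotProduct_eq_zero_of_mem_range_transpose (hkerB.le hker_B) hker_D
  have hsum : w ⬝ᵥ R *ᵥ w + y ⬝ᵥ G *ᵥ y = 0 := by
    simpa [sumElim_dotProduct_sumElim, dotProduct_comm (R *ᵥ w)] using horth
  obtain ⟨hw, hy⟩ := (add_eq_zero_iff_of_nonneg (dotProduct_mulVec_self_nonneg_s13 hR w)
    (dotProduct_mulVec_self_nonneg_s13 hG y)).1 hsum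
  exact ⟨eq_zero_of_dotProduct_mulVec_self_eq_zero hR hw,
    eq_zero_of_dotProduct_mulVec_self_eq_zero hG hy⟩

/-- Key step in Theorem 3.3: any kernel vector (u, v, w, x, y, z) of
A = [[B_c E_c, 0, B_r R, 0, B_g, B_j], [0, D_l 𝓡_l, D_r, D_u, D_g G, 0]]
satisfies w = 0 and y = 0. -/
theorem kernel_of_A_w_y_vanish {p t nm nc nr nu nw nl ng nj : ℕ}
    (Bm : Matrix (Fin p) (Fin nm) ℝ) (Bc : Matrix (Fin p) (Fin nc) ℝ)
    (Br : Matrix (Fin p) (Fin nr) ℝ) (Bu : Matrix (Fin p) (Fin nu) ℝ)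
    (Bw : Matrix (Fin p) (Fin nw) ℝ) (Bl : Matrix (Fin p) (Fin nl) ℝ)
    (Bg : Matrix (Fin p) (Fin ng) ℝ) (Bj : Matrix (Fin p) (Fin nj) ℝ)
    (Dm : Matrix (Fin t) (Fin nm) ℝ) (Dc : Matrix (Fin t) (Fin nc) ℝ)
    (Dr : Matrix (Fin t) (Fin nr) ℝ) (Du : Matrix (Fin t) (Fin nu) ℝ)
    (Dw : Matrix (Fin t) (Fin nw) ℝ) (Dl : Matrix (Fin t) (Fin nl) ℝ)
    (Dg : Matrix (Fin t) (Fin ng) ℝ) (Dj : Matrix (Fin t) (Fin nj) ℝ)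
    (R : Matrix (Fin nr) (Fin nr) ℝ) (G : Matrix (Fin ng) (Fin ng) ℝ)
    (Ec : Matrix (Fin nc) (Fin nc) ℝ) (Rl : Matrix (Fin nl) (Fin nl) ℝ)
    (hBD : (Matrix.fromCols Bm (Matrix.fromCols Bc (Matrix.fromCols Br
      (Matrix.fromCols Bu (Matrix.fromCols Bw (Matrix.fromCols Bl
        (Matrix.fromCols Bg Bj))))))) * (Matrix.fromCols Dm (Matrix.fromCols Dc (Matrix.fromCols Dr
      (Matrix.fromCols Du (Matrix.fromCols Dw (Matrix.fromCols Dl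
        (Matrix.fromCols Dg Dj)))))))ᵀ = 0)
    (hkerB : LinearMap.ker (Matrix.fromCols Bm (Matrix.fromCols Bc (Matrix.fromCols Br
      (Matrix.fromCols Bu (Matrix.fromCols Bw (Matrix.fromCols Bl
        (Matrix.fromCols Bg Bj))))))).mulVecLin
        = LinearMap.range ((Matrix.fromCols Dm (Matrix.fromCols Dc (Matrix.fromCols Dr
      (Matrix.fromCols Du (Matrix.fromCols Dw (Matrix.fromCols Dl
        (Matrix.fromCols Dg Dj)))))))ᵀ).mulVecLin)
    (hkerD : LinearMap.ker (Matrix.fromCols Dm (Matrix.fromCols Dc (Matrix.fromCols Dr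
      (Matrix.fromCols Du (Matrix.fromCols Dw (Matrix.fromCols Dl
        (Matrix.fromCols Dg Dj))))))).mulVecLin
        = LinearMap.range ((Matrix.fromCols Bm (Matrix.fromCols Bc (Matrix.fromCols Br
      (Matrix.fromCols Bu (Matrix.fromCols Bw (Matrix.fromCols Bl
        (Matrix.fromCols Bg Bj)))))))ᵀ).mulVecLin)
    (hR : ∀ u : Fin nr → ℝ, u ≠ 0 → 0 < u ⬝ᵥ R.mulVec u)
    (hG : ∀ u : Fin ng → ℝ, u ≠ 0 → 0 < u ⬝ᵥ G.mulVec u)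
    (hEc : Ec.det ≠ 0) (hRl : Rl.det ≠ 0)
    :
    ∀ (u : Fin nc → ℝ) (v : Fin nl → ℝ) (w : Fin nr → ℝ) (x : Fin nu → ℝ)
      (y : Fin ng → ℝ) (z : Fin nj → ℝ),
      (Matrix.fromRows
      (Matrix.fromCols (Bc * Ec) (Matrix.fromCols (0 : Matrix (Fin p) (Fin nl) ℝ)
        (Matrix.fromCols (Br * R) (Matrix.fromCols (0 : Matrix (Fin p) (Fin nu) ℝ)
          (Matrix.fromCols Bg Bj)))))
      (Matrix.fromCols (0 : Matrix (Fin t) (Fin nc) ℝ)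
        (Matrix.fromCols (Dl * Rl) (Matrix.fromCols Dr
          (Matrix.fromCols Du (Matrix.fromCols (Dg * G)
            (0 : Matrix (Fin t) (Fin nj) ℝ))))))).mulVec
        (Sum.elim u (Sum.elim v (Sum.elim w (Sum.elim x (Sum.elim y z))))) = 0 →
      w = 0 ∧ y = 0 :=
  kernel_of_A_w_y_vanish_general Bm Bc Br Bu Bw Bl Bg Bj Dm Dc Dr Du Dw Dl Dg Dj R G Ec Rl hkerB hR
    hG
end

section
/- Let J = [[I_a, −M, 0, 0], [0, 0, −W, I_b], [B_q, 0, B_φ, 0], [0, D_q, 0, D_φ]] with M, W positive definite, and suppose B = (B_q B_φ), D = (D_q D_φ) have full row rank, B D^T = 0, and rank B + rank D = a + b. Then J is nonsingular. -/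
open Matrix

lemma ker_eq_range_aux {m k n : Type*} [Fintype m] [Fintype k] [Fintype n]
    [DecidableEq m] [DecidableEq k] [DecidableEq n]
    (B : Matrix m n ℝ) (D : Matrix k n ℝ) (h0 : B * Dᵀ = 0)
    (hrk : B.rank + D.rank = Fintype.card n) :
    LinearMap.ker B.mulVecLin = LinearMap.range Dᵀ.mulVecLin := by
  have hle : LinearMap.range Dᵀ.mulVecLin ≤ LinearMap.ker B.mulVecLin := by
    rintro x ⟨y, rfl⟩
    simp only [LinearMap.mem_ker, Matrix.mulVecLin_apply, Matrix.mulVec_mulVec, h0,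
      Matrix.zero_mulVec]
  have h1 : B.rank + Module.finrank ℝ (LinearMap.ker B.mulVecLin) = Fintype.card n := by
    have := LinearMap.finrank_range_add_finrank_ker B.mulVecLin
    rwa [Module.finrank_pi] at this
  have h2 : Module.finrank ℝ (LinearMap.range Dᵀ.mulVecLin) = D.rank := by
    rw [← Matrix.rank_transpose D]; rfl
  refine (Submodule.eq_of_le_of_finrank_le hle ?_).symm
  rw [h2]
  omega

/-- A circuit containing only memristors: if M, W are positive definite and the
reduced loop/cutset matrices B = (B_q B_φ), D = (D_q D_φ) have full row rank,
satisfy BDᵀ = 0 and have complementary ranks p + r = a + b, then the Jacobian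
J = [[I, −M, 0, 0], [0, 0, −W, I], [B_q, 0, B_φ, 0], [0, D_q, 0, D_φ]] is nonsingular. -/
theorem memristor_jacobian_nonsingular {a b p r : ℕ} (hpr : p + r = a + b)
    (M : Matrix (Fin a) (Fin a) ℝ) (W : Matrix (Fin b) (Fin b) ℝ)
    (Bq : Matrix (Fin p) (Fin a) ℝ) (Bphi : Matrix (Fin p) (Fin b) ℝ)
    (Dq : Matrix (Fin r) (Fin a) ℝ) (Dphi : Matrix (Fin r) (Fin b) ℝ)
    (hM : ∀ u : Fin a → ℝ, u ≠ 0 → 0 < u ⬝ᵥ M.mulVec u)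
    (hW : ∀ u : Fin b → ℝ, u ≠ 0 → 0 < u ⬝ᵥ W.mulVec u)
    (hBD : Matrix.fromCols Bq Bphi * (Matrix.fromCols Dq Dphi)ᵀ = 0)
    (hBrank : (Matrix.fromCols Bq Bphi).rank = p)
    (hDrank : (Matrix.fromCols Dq Dphi).rank = r) :
    Function.Bijective (Matrix.fromRows
        (Matrix.fromCols (1 : Matrix (Fin a) (Fin a) ℝ)
          (Matrix.fromCols (-M) (Matrix.fromCols 0 0)))
        (Matrix.fromRows
          (Matrix.fromCols (0 : Matrix (Fin b) (Fin a) ℝ)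
            (Matrix.fromCols 0 (Matrix.fromCols (-W) (1 : Matrix (Fin b) (Fin b) ℝ))))
          (Matrix.fromRows
            (Matrix.fromCols Bq (Matrix.fromCols 0 (Matrix.fromCols Bphi 0)))
            (Matrix.fromCols (0 : Matrix (Fin r) (Fin a) ℝ)
              (Matrix.fromCols Dq (Matrix.fromCols 0 Dphi)))))).mulVecLin := by
  set B := Matrix.fromCols Bq Bphi with hB
  set D := Matrix.fromCols Dq Dphi with hD
  have hDB : D * Bᵀ = 0 := by
    have := congrArg Matrix.transpose hBD
    rwa [Matrix.transpose_mul, Matrix.transpose_transpose, Matrix.transpose_zero] at this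
  -- injectivity
  have hinj : Function.Injective (Matrix.fromRows
        (Matrix.fromCols (1 : Matrix (Fin a) (Fin a) ℝ)
          (Matrix.fromCols (-M) (Matrix.fromCols 0 0)))
        (Matrix.fromRows
          (Matrix.fromCols (0 : Matrix (Fin b) (Fin a) ℝ)
            (Matrix.fromCols 0 (Matrix.fromCols (-W) (1 : Matrix (Fin b) (Fin b) ℝ))))
          (Matrix.fromRows
            (Matrix.fromCols Bq (Matrix.fromCols 0 (Matrix.fromCols Bphi 0)))
            (Matrix.fromCols (0 : Matrix (Fin r) (Fin a) ℝ)
              (Matrix.fromCols Dq (Matrix.fromCols 0 Dphi)))))).mulVecLin := by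
    rw [injective_iff_map_eq_zero]
    intro x hx
    set u : Fin a → ℝ := fun i => x (Sum.inl i) with hu
    set v : Fin a → ℝ := fun i => x (Sum.inr (Sum.inl i)) with hv
    set w : Fin b → ℝ := fun i => x (Sum.inr (Sum.inr (Sum.inl i))) with hw
    set z : Fin b → ℝ := fun i => x (Sum.inr (Sum.inr (Sum.inr i))) with hz
    have hxeq : x = Sum.elim u (Sum.elim v (Sum.elim w z)) := by
      funext i
      rcases i with i | i | i | i <;> rfl
    rw [Matrix.mulVecLin_apply, hxeq] at hx
    simp only [Matrix.fromRows_mulVec, Matrix.fromCols_mulVec_sumElim, Matrix.one_mulVec,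
      Matrix.zero_mulVec, Matrix.neg_mulVec, add_zero, zero_add, funext_iff, Sum.forall,
      Sum.elim_inl, Sum.elim_inr, Pi.zero_apply, Pi.add_apply, Pi.neg_apply] at hx
    obtain ⟨h1, h2, h3, h4⟩ := hx
    have hu_eq : u = M *ᵥ v := by funext i; have := h1 i; linarith
    have hz_eq : z = W *ᵥ w := by funext i; have := h2 i; linarith
    have hBmem : Sum.elim u w ∈ LinearMap.ker B.mulVecLin := by
      rw [LinearMap.mem_ker, Matrix.mulVecLin_apply, hB, Matrix.fromCols_mulVec_sumElim]
      funext i; have := h3 i; simpa using this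
    have hDmem : Sum.elim v z ∈ LinearMap.ker D.mulVecLin := by
      rw [LinearMap.mem_ker, Matrix.mulVecLin_apply, hD, Matrix.fromCols_mulVec_sumElim]
      funext i; have := h4 i; simpa using this
    have hcard : Fintype.card (Fin a ⊕ Fin b) = a + b := by simp
    rw [ker_eq_range_aux B D hBD (by rw [hBrank, hDrank, hcard]; omega)] at hBmem
    rw [ker_eq_range_aux D B hDB (by rw [hBrank, hDrank, hcard]; omega)] at hDmem
    obtain ⟨y, hy⟩ := hBmem
    obtain ⟨s, hs⟩ := hDmem
    have horth : Sum.elim u w ⬝ᵥ Sum.elim v z = 0 := by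
      rw [← hy, ← hs]
      simp only [Matrix.mulVecLin_apply]
      rw [Matrix.mulVec_transpose, ← Matrix.dotProduct_mulVec, Matrix.mulVec_mulVec, hDB,
        Matrix.zero_mulVec, dotProduct_zero]
    rw [sumElim_dotProduct_sumElim, hu_eq, hz_eq, dotProduct_comm] at horth
    have hv0 : v = 0 := by
      by_contra h
      have hMv := hM v h
      rcases eq_or_ne w 0 with hw0 | hw0
      · rw [hw0] at horth; simp [Matrix.mulVec_zero] at horth; linarith
      · have := hW w hw0; linarith
    have hw0 : w = 0 := by
      by_contra h
      have hWw := hW w h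
      rw [hv0] at horth; simp [Matrix.mulVec_zero] at horth; linarith
    rw [hxeq, hv0, hw0, hu_eq, hv0, hz_eq, hw0]
    simp [Matrix.mulVec_zero]
  refine ⟨hinj, ?_⟩
  have hdim : Module.finrank ℝ ((Fin a ⊕ (Fin a ⊕ (Fin b ⊕ Fin b))) → ℝ)
      = Module.finrank ℝ ((Fin a ⊕ (Fin b ⊕ (Fin p ⊕ Fin r))) → ℝ) := by
    simp only [Module.finrank_pi, Fintype.card_sum, Fintype.card_fin]
    omega
  exact (LinearMap.injective_iff_surjective_of_finrank_eq_finrank hdim).mp hinj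
end

section
/- Let B ∈ ℝ^{p×m} and D ∈ ℝ^{q×m} satisfy BD^T = 0, rank B = p, rank D = q, p + q = m. Let K ⊆ {1,...,m} index a subset of columns. Then the column submatrix B_K has full column rank if and only if the column submatrix D_{K^c} (the columns of D not in K) has full row rank q. -/
open Matrix

section Aux

variable {p q m : ℕ}

private lemma submatrix_id_mulVec (A : Matrix (Fin p) (Fin m) ℝ) (K : Finset (Fin m))
    (x : {j : Fin m // j ∈ K} → ℝ) :
    (A.submatrix id (fun j : {j : Fin m // j ∈ K} => (j : Fin m))).mulVec x
      = A.mulVec (fun i => if h : i ∈ K then x ⟨i, h⟩ else 0) := by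
  ext i
  simp only [Matrix.mulVec, dotProduct, Matrix.submatrix_apply, id_eq]
  rw [show (Finset.univ : Finset (Fin m)) = Finset.univ from rfl]
  have h1 : ∑ t : Fin m, A i t * (if h : t ∈ K then x ⟨t, h⟩ else 0)
      = ∑ t ∈ K, A i t * (if h : t ∈ K then x ⟨t, h⟩ else 0) := by
    refine (Finset.sum_subset (Finset.subset_univ K) ?_).symm
    intro t _ ht
    rw [dif_neg ht, mul_zero]
  rw [h1, ← Finset.sum_attach K, Finset.univ_eq_attach]
  refine Finset.sum_congr rfl fun j _ => ?_
  rw [dif_pos j.2]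

private lemma rank_add_ker {n r : ℕ} (A : Matrix (Fin r) (Fin n) ℝ) :
    A.rank + Module.finrank ℝ (LinearMap.ker A.mulVecLin) = n := by
  have := LinearMap.finrank_range_add_finrank_ker A.mulVecLin
  simpa [Matrix.rank, Module.finrank_pi] using this

private lemma rank_add_ker' {α β : Type*} [Fintype α] [Fintype β]
    (A : Matrix β α ℝ) :
    A.rank + Module.finrank ℝ (LinearMap.ker A.mulVecLin) = Fintype.card α := by
  have := LinearMap.finrank_range_add_finrank_ker A.mulVecLin
  simpa [Matrix.rank, Module.finrank_pi] using this

end Aux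

/-- Lemma 3.1 in matrix form: with B, D full-row-rank, BDᵀ = 0 and complementary
ranks, the column submatrix B_K has full column rank iff the column submatrix
D_{Kᶜ} has full row rank. -/
theorem BK_fullcol_iff_DKc_fullrow {p q m : ℕ}
    (B : Matrix (Fin p) (Fin m) ℝ) (D : Matrix (Fin q) (Fin m) ℝ)
    (hBD : B * Dᵀ = 0) (hB : B.rank = p) (hD : D.rank = q) (hpq : p + q = m)
    (K : Finset (Fin m)) :
    (B.submatrix id (fun j : {j : Fin m // j ∈ K} => (j : Fin m))).rank = K.card ↔
    (D.submatrix id (fun j : {j : Fin m // j ∈ Kᶜ} => (j : Fin m))).rank = q := by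
  classical
  set BK := B.submatrix id (fun j : {j : Fin m // j ∈ K} => (j : Fin m)) with hBK
  set DK := D.submatrix id (fun j : {j : Fin m // j ∈ Kᶜ} => (j : Fin m)) with hDK
  -- The transposed complement submatrix
  set T := Dᵀ.submatrix (fun j : {j : Fin m // j ∈ Kᶜ} => (j : Fin m)) id with hT
  have hTrank : T.rank = DK.rank := by
    rw [hT, hDK, ← Matrix.transpose_submatrix, Matrix.rank_transpose]
  -- Step 1: ker B = range Dᵀ
  have hrangeD : Module.finrank ℝ ↥(LinearMap.range (Dᵀ).mulVecLin) = q := by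
    have : (Dᵀ).rank = q := by rw [Matrix.rank_transpose, hD]
    simpa [Matrix.rank] using this
  have hkerB : Module.finrank ℝ ↥(LinearMap.ker B.mulVecLin) = q := by
    have := rank_add_ker B
    omega
  have hle : LinearMap.range (Dᵀ).mulVecLin ≤ LinearMap.ker B.mulVecLin := by
    rw [LinearMap.range_le_ker_iff, ← Matrix.mulVecLin_mul, hBD]
    exact Matrix.mulVecLin_zero
  have hkey : LinearMap.range (Dᵀ).mulVecLin = LinearMap.ker B.mulVecLin :=
    Submodule.eq_of_le_of_finrank_eq hle (by rw [hrangeD, hkerB])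
  -- injectivity of Dᵀ
  have hDTinj : Function.Injective (Dᵀ).mulVecLin := by
    rw [← LinearMap.ker_eq_bot, ← Submodule.finrank_eq_zero]
    have h2 := rank_add_ker (Dᵀ)
    have : (Dᵀ).rank = q := by rw [Matrix.rank_transpose, hD]
    omega
  -- The linear map between the two kernels
  have hmem : ∀ y ∈ LinearMap.ker T.mulVecLin,
      ((LinearMap.funLeft ℝ ℝ (fun j : {j : Fin m // j ∈ K} => (j : Fin m))).comp
        (Dᵀ).mulVecLin) y ∈ LinearMap.ker BK.mulVecLin := by
    intro y hy
    have hsupp : ∀ i : Fin m, i ∉ K → (Dᵀ).mulVec y i = 0 := by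
      intro i hi
      have := congrFun (LinearMap.mem_ker.mp hy) ⟨i, Finset.mem_compl.mpr hi⟩
      simpa [hT, Matrix.mulVecLin_apply, Matrix.mulVec, dotProduct,
        Matrix.submatrix_apply] using this
    simp only [LinearMap.mem_ker, LinearMap.comp_apply, Matrix.mulVecLin_apply,
      LinearMap.funLeft_apply]
    rw [hBK, submatrix_id_mulVec]
    have hext : (fun i => if h : i ∈ K then (LinearMap.funLeft ℝ ℝ (fun j : {j : Fin m // j ∈ K} => (j : Fin m))) ((Dᵀ).mulVec y) ⟨i, h⟩ else 0)
        = (Dᵀ).mulVec y := by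
      ext i
      by_cases h : i ∈ K
      · rw [dif_pos h]; rfl
      · rw [dif_neg h, hsupp i h]
    rw [hext, Matrix.mulVec_mulVec, hBD, Matrix.zero_mulVec]
  set f := ((LinearMap.funLeft ℝ ℝ (fun j : {j : Fin m // j ∈ K} => (j : Fin m))).comp
        (Dᵀ).mulVecLin).restrict hmem with hf
  have hbij : Function.Bijective f := by
    constructor
    · intro y z hyz
      apply Subtype.ext
      apply hDTinj
      have hK : ∀ j : {j : Fin m // j ∈ K}, (Dᵀ).mulVec y.1 j = (Dᵀ).mulVec z.1 j := by
        intro j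
        have := congrFun (congrArg Subtype.val hyz) j
        simpa only [hf, LinearMap.restrict_apply, LinearMap.comp_apply,
          Matrix.mulVecLin_apply, LinearMap.funLeft_apply] using this
      have hKc : ∀ y' ∈ LinearMap.ker T.mulVecLin, ∀ i : Fin m, i ∉ K →
          (Dᵀ).mulVec y' i = 0 := by
        intro y' hy' i hi
        have := congrFun (LinearMap.mem_ker.mp hy') ⟨i, Finset.mem_compl.mpr hi⟩
        simpa [hT, Matrix.mulVecLin_apply, Matrix.mulVec, dotProduct,
          Matrix.submatrix_apply] using this
      ext i
      by_cases h : i ∈ K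
      · exact hK ⟨i, h⟩
      · rw [Matrix.mulVecLin_apply, Matrix.mulVecLin_apply,
          hKc y.1 y.2 i h, hKc z.1 z.2 i h]
    · rintro ⟨x, hx⟩
      -- extend x by zero
      set v : Fin m → ℝ := fun i => if h : i ∈ K then x ⟨i, h⟩ else 0 with hv
      have hvker : v ∈ LinearMap.ker B.mulVecLin := by
        rw [LinearMap.mem_ker, Matrix.mulVecLin_apply, ← submatrix_id_mulVec, ← hBK]
        exact LinearMap.mem_ker.mp hx
      rw [← hkey] at hvker
      obtain ⟨y, hy⟩ := hvker
      have hyT : y ∈ LinearMap.ker T.mulVecLin := by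
        rw [LinearMap.mem_ker]
        ext j
        have : (Dᵀ).mulVec y j.1 = v j.1 := by rw [← hy]; rfl
        have hj : (j : Fin m) ∉ K := Finset.mem_compl.mp j.2
        simp only [hT, Matrix.mulVecLin_apply, Matrix.mulVec, dotProduct,
          Matrix.submatrix_apply, id_eq, Pi.zero_apply]
        calc ∑ t, Dᵀ (j : Fin m) t * y t = (Dᵀ).mulVec y j.1 := rfl
        _ = v j.1 := this
        _ = 0 := by rw [hv]; exact dif_neg hj
      refine ⟨⟨y, hyT⟩, ?_⟩
      apply Subtype.ext
      ext j
      have : (Dᵀ).mulVec y j.1 = v j.1 := by rw [← hy]; rfl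
      simp only [hf, LinearMap.restrict_apply, LinearMap.comp_apply,
        Matrix.mulVecLin_apply, LinearMap.funLeft_apply]
      rw [this, hv]
      exact dif_pos j.2
  have hdim : Module.finrank ℝ ↥(LinearMap.ker T.mulVecLin)
      = Module.finrank ℝ ↥(LinearMap.ker BK.mulVecLin) :=
    LinearEquiv.finrank_eq (LinearEquiv.ofBijective f hbij)
  -- rank-nullity counts
  have h1 := rank_add_ker' BK
  have h2 := rank_add_ker' T
  rw [Fintype.card_coe] at h1
  rw [Fintype.card_fin] at h2
  have hKle : K.card ≤ m := by
    simpa using Finset.card_le_card (Finset.subset_univ K)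
  rw [← hTrank]
  have hTle : T.rank ≤ q := by
    simpa using Matrix.rank_le_card_width T
  omega
end

section
/- Let B ∈ ℝ^{p×m}, D ∈ ℝ^{q×m} with BD^T = 0, rank B = p, rank D = q, p + q = m, and let K index a set of columns. Then dim ker D_K (the number of independent K-loops) equals p − rank B_{K^c}. -/
/-!
Extension by zero identifies `ker D_K` with the vectors of `ker D` supported in `K`. Since
`ker D = im Bᵀ` (the inclusion comes from `B Dᵀ = 0`, equality from counting dimensions) and
`Bᵀ` is injective, these are the images `Bᵀ y` of the `y` with `(Bᵀ y)_j = 0` for `j ∉ K`, that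
is, of `ker (B_{Kᶜ})ᵀ`, a space of dimension `p - rank B_{Kᶜ}` by rank–nullity.
-/

open Matrix

open Function Module

theorem LinearMap.finrank_ker_comp_of_injective {𝕜 V W U : Type*} [DivisionRing 𝕜]
    [AddCommGroup V] [Module 𝕜 V] [AddCommGroup W] [Module 𝕜 W] [AddCommGroup U] [Module 𝕜 U]
    {f : V →ₗ[𝕜] W} (hf : Injective f) (g : W →ₗ[𝕜] U) :
    finrank 𝕜 (LinearMap.ker (g ∘ₗ f)) = finrank 𝕜 ↥(LinearMap.range f ⊓ LinearMap.ker g) := by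
  rw [LinearMap.ker_comp, ← Submodule.map_comap_eq]
  exact (Submodule.equivMapOfInjective f hf _).finrank_eq

theorem Function.ExtendByZero.range_linearMap_subtype {R n : Type*} [Semiring R] [Fintype n]
    [DecidableEq n] (s : Finset n) :
    LinearMap.range (ExtendByZero.linearMap R (Subtype.val : s → n)) =
      LinearMap.ker (LinearMap.funLeft R R (Subtype.val : {j // j ∈ sᶜ} → n)) := by
  ext x
  constructor
  · rintro ⟨y, rfl⟩
    ext ⟨j, hj⟩
    exact extend_apply' _ _ _ fun ⟨i, hi⟩ => Finset.mem_compl.1 hj (hi ▸ i.2 :)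
  · intro hx
    refine ⟨fun j => x j, funext fun j => ?_⟩
    by_cases hj : j ∈ s
    · exact Subtype.val_injective.extend_apply (fun j : s => x j) 0 ⟨j, hj⟩
    · rw [ExtendByZero.linearMap_apply, extend_apply' _ _ _ fun ⟨i, hi⟩ => hj (hi ▸ i.2)]
      exact (congrFun hx ⟨j, Finset.mem_compl.2 hj⟩).symm

namespace Matrix

variable {𝕜 R l m n p q : Type*} [Fintype n]

theorem mulVecLin_submatrix_left [CommSemiring R] (A : Matrix m n R) (f : l → m) :
    (A.submatrix f id).mulVecLin = LinearMap.funLeft R R f ∘ₗ A.mulVecLin :=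
  rfl

theorem mulVecLin_submatrix_right_of_injective [CommSemiring R] [Fintype l] (A : Matrix m n R)
    {e : l → n} (he : Injective e) :
    (A.submatrix id e).mulVecLin = A.mulVecLin ∘ₗ ExtendByZero.linearMap R e := by
  ext x i
  refine Fintype.sum_of_injective e he _ _ (fun j hj => ?_) (fun k => ?_)
  · simp [extend_apply' _ _ _ hj]
  · simp [he.extend_apply]

theorem rank_add_finrank_ker [Field 𝕜] (A : Matrix m n 𝕜) :
    A.rank + finrank 𝕜 (LinearMap.ker A.mulVecLin) = Fintype.card n := by
  rw [rank, LinearMap.finrank_range_add_finrank_ker, finrank_fintype_fun_eq_card]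

theorem injective_mulVecLin_of_rank_eq [Field 𝕜] {A : Matrix m n 𝕜}
    (hA : A.rank = Fintype.card n) : Injective A.mulVecLin := by
  have := A.rank_add_finrank_ker
  rw [← LinearMap.ker_eq_bot, ← Submodule.finrank_eq_zero]
  omega

theorem ker_mulVecLin_eq_range_transpose [Field 𝕜] [Fintype p] [Fintype q]
    {B : Matrix p n 𝕜} {D : Matrix q n 𝕜} (hBD : B * Dᵀ = 0) (hB : B.rank = Fintype.card p)
    (hD : D.rank = Fintype.card q) (hpq : Fintype.card p + Fintype.card q = Fintype.card n) :
    LinearMap.ker D.mulVecLin = LinearMap.range Bᵀ.mulVecLin := by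
  have hDB : D * Bᵀ = 0 := by rw [← transpose_transpose D, ← transpose_mul, hBD, transpose_zero]
  have hle : LinearMap.range Bᵀ.mulVecLin ≤ LinearMap.ker D.mulVecLin := by
    rw [LinearMap.range_le_ker_iff, ← mulVecLin_mul, hDB, mulVecLin_zero]
  refine (Submodule.eq_of_le_of_finrank_le hle ?_).symm
  have := D.rank_add_finrank_ker
  change _ ≤ Bᵀ.rank
  rw [rank_transpose]
  omega

end Matrix

/-- Dual counting statement: dim ker D_K (the number of independent K-loops)
equals p − rank B_{Kᶜ}. -/
theorem dim_ker_DK {p q m : ℕ}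
    (B : Matrix (Fin p) (Fin m) ℝ) (D : Matrix (Fin q) (Fin m) ℝ)
    (hBD : B * Dᵀ = 0) (hB : B.rank = p) (hD : D.rank = q) (hpq : p + q = m)
    (K : Finset (Fin m)) :
    Module.finrank ℝ
        ↥(LinearMap.ker (D.submatrix id (fun j : {j : Fin m // j ∈ K} => (j : Fin m))).mulVecLin)
      = p - (B.submatrix id (fun j : {j : Fin m // j ∈ Kᶜ} => (j : Fin m))).rank := by
  set BKc := B.submatrix id (fun j : {j : Fin m // j ∈ Kᶜ} => (j : Fin m))
  have hBT : Injective Bᵀ.mulVecLin :=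
    injective_mulVecLin_of_rank_eq (by rw [rank_transpose, hB, Fintype.card_fin])
  have hcycle : LinearMap.ker D.mulVecLin = LinearMap.range Bᵀ.mulVecLin :=
    ker_mulVecLin_eq_range_transpose hBD (by simpa) (by simpa) (by simpa)
  have hrank_nullity := BKcᵀ.rank_add_finrank_ker
  rw [rank_transpose, Fintype.card_fin] at hrank_nullity
  calc _ = finrank ℝ ↥(LinearMap.range (ExtendByZero.linearMap ℝ (Subtype.val : K → Fin m)) ⊓
          LinearMap.ker D.mulVecLin) := by
        rw [mulVecLin_submatrix_right_of_injective _ Subtype.val_injective,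
          LinearMap.finrank_ker_comp_of_injective
            (extend_injective Subtype.val_injective (0 : Fin m → ℝ))]
    _ = finrank ℝ ↥(LinearMap.range Bᵀ.mulVecLin ⊓
          LinearMap.ker (LinearMap.funLeft ℝ ℝ (Subtype.val : {j // j ∈ Kᶜ} → Fin m))) := by
        rw [ExtendByZero.range_linearMap_subtype, hcycle, inf_comm]
    _ = finrank ℝ ↥(LinearMap.ker BKcᵀ.mulVecLin) := by
        rw [← LinearMap.finrank_ker_comp_of_injective hBT, transpose_submatrix,
          mulVecLin_submatrix_left]
    _ = p - BKc.rank := by omega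
end
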